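/- There are exactly two lines in ℙ³ meeting all four lines L_a, L_b, L_c, L_d of configuration B, namely the line through the points (1:0:i:0) and (0:1:0:i) and the line through the points (1:0:−i:0) and (0:1:0:−i), where i² = −1. -/
import Mathlib


open Projectivization
open scoped LinearAlgebra.Projectivization

/-- Homogeneous coordinates of the 16 points of configuration B (the harmonic
configuration): `vB x i` is the `i`-th point of the quadruple on the `x`-th line. -/
def vB : Fin 4 → Fin 4 → Fin 4 → ℂ :=
  ![![![1,0,0,0], ![0,0,1,0], ![1,0,1,0], ![1,0,-1,0]],
    ![![0,1,0,0], ![0,0,0,1], ![0,1,0,1], ![0,1,0,-1]],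
    ![![1,1,0,0], ![0,0,1,1], ![1,1,1,1], ![1,1,-1,-1]],
    ![![1,0,0,-1], ![0,1,1,0], ![1,1,1,-1], ![-1,1,1,1]]]

lemma vB_ne_zero : ∀ x i, vB x i ≠ 0 := by
  intro x i
  fin_cases x <;> fin_cases i <;> simp [vB, Matrix.cons_eq_zero_iff]

/-- The 16 points of configuration B in `ℙ³`. -/
noncomputable def ptB (x i : Fin 4) : ℙ ℂ (Fin 4 → ℂ) :=
  Projectivization.mk ℂ (vB x i) (vB_ne_zero x i)

/-- The quadruple `Z_x` of configuration B (`x = 0,1,2,3` for `a,b,c,d`). -/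
noncomputable def ZB (x : Fin 4) : Set (ℙ ℂ (Fin 4 → ℂ)) := Set.range (ptB x)

/-- Configuration B as a set of 16 points of `ℙ³`. -/
noncomputable def configB : Set (ℙ ℂ (Fin 4 → ℂ)) := ⋃ x, ZB x

/-- The four lines `L_a, L_b, L_c, L_d` of configuration B, as 2-dimensional subspaces of
`ℂ⁴`; the `x`-th line is spanned by the first two points of the quadruple `Z_x`
(`L_a : y = w = 0`, `L_b : x = z = 0`, `L_c : x - y = z - w = 0`, `L_d : y - z = x + w = 0`). -/
noncomputable def LB (x : Fin 4) : Submodule ℂ (Fin 4 → ℂ) :=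
  Submodule.span ℂ {vB x 0, vB x 1}

/-- The transversal through `(1:0:i:0)` and `(0:1:0:i)`. -/
noncomputable def SB : Submodule ℂ (Fin 4 → ℂ) :=
  Submodule.span ℂ {![1, 0, Complex.I, 0], ![0, 1, 0, Complex.I]}

/-- The transversal through `(1:0:-i:0)` and `(0:1:0:-i)`. -/
noncomputable def SB' : Submodule ℂ (Fin 4 → ℂ) :=
  Submodule.span ℂ {![1, 0, -Complex.I, 0], ![0, 1, 0, -Complex.I]}


lemma span_pair_smul {a c : ℂ} (ha : a ≠ 0) (hc : c ≠ 0) (x y : Fin 4 → ℂ) :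
    Submodule.span ℂ {a • x, c • y} = Submodule.span ℂ {x, y} := by
  apply le_antisymm <;> rw [Submodule.span_le] <;> intro z hz <;>
    simp only [Set.mem_insert_iff, Set.mem_singleton_iff] at hz <;>
    rcases hz with rfl | rfl
  · exact Submodule.smul_mem _ _ (Submodule.subset_span (by simp))
  · exact Submodule.smul_mem _ _ (Submodule.subset_span (by simp))
  · have h : a⁻¹ • (a • z) ∈ Submodule.span ℂ {a • z, c • y} :=
      Submodule.smul_mem _ _ (Submodule.subset_span (Set.mem_insert _ _))
    rwa [smul_smul, inv_mul_cancel₀ ha, one_smul] at h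
  · have h : c⁻¹ • (c • z) ∈ Submodule.span ℂ {a • x, c • z} :=
      Submodule.smul_mem _ _ (Submodule.subset_span (Set.mem_insert_of_mem _ rfl))
    rwa [smul_smul, inv_mul_cancel₀ hc, one_smul] at h

lemma finrank_span_pair' {u v : Fin 4 → ℂ} (h : LinearIndependent ℂ ![u,v]) :
    Module.finrank ℂ (Submodule.span ℂ {u,v}) = 2 := by
  rw [show ({u,v} : Set (Fin 4 → ℂ)) = Set.range ![u,v] by
    simp [Matrix.range_cons, Matrix.range_empty, Set.pair_comm]]
  simpa using finrank_span_eq_card h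

lemma SB_meets : ∀ x, ∃ w : Fin 4 → ℂ, w ∈ SB ∧ w ∈ LB x ∧ w ≠ 0 := by
  intro x
  fin_cases x
  · refine ⟨![1,0,Complex.I,0], Submodule.subset_span (by simp), ?_, ?_⟩
    · rw [LB, Submodule.mem_span_pair]
      exact ⟨1, Complex.I, by funext i; fin_cases i <;> simp [vB]⟩
    · intro h; have := congrFun h 0; simp at this
  · refine ⟨![0,1,0,Complex.I], Submodule.subset_span (by simp), ?_, ?_⟩
    · rw [LB, Submodule.mem_span_pair]
      exact ⟨1, Complex.I, by funext i; fin_cases i <;> simp [vB]⟩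
    · intro h; have := congrFun h 1; simp at this
  · refine ⟨![1,1,Complex.I,Complex.I], ?_, ?_, ?_⟩
    · rw [SB, Submodule.mem_span_pair]
      exact ⟨1, 1, by funext i; fin_cases i <;> simp⟩
    · rw [LB, Submodule.mem_span_pair]
      exact ⟨1, Complex.I, by funext i; fin_cases i <;> simp [vB]⟩
    · intro h; have := congrFun h 0; simp at this
  · refine ⟨![1,Complex.I,Complex.I,-1], ?_, ?_, ?_⟩
    · rw [SB, Submodule.mem_span_pair]
      exact ⟨1, Complex.I, by funext i; fin_cases i <;> simp [Complex.I_mul_I]⟩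
    · rw [LB, Submodule.mem_span_pair]
      exact ⟨1, Complex.I, by funext i; fin_cases i <;> simp [vB]⟩
    · intro h; have := congrFun h 0; simp at this

lemma SB'_meets : ∀ x, ∃ w : Fin 4 → ℂ, w ∈ SB' ∧ w ∈ LB x ∧ w ≠ 0 := by
  intro x
  fin_cases x
  · refine ⟨![1,0,-Complex.I,0], Submodule.subset_span (by simp), ?_, ?_⟩
    · rw [LB, Submodule.mem_span_pair]
      exact ⟨1, -Complex.I, by funext i; fin_cases i <;> simp [vB]⟩
    · intro h; have := congrFun h 0; simp at this
  · refine ⟨![0,1,0,-Complex.I], Submodule.subset_span (by simp), ?_, ?_⟩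
    · rw [LB, Submodule.mem_span_pair]
      exact ⟨1, -Complex.I, by funext i; fin_cases i <;> simp [vB]⟩
    · intro h; have := congrFun h 1; simp at this
  · refine ⟨![1,1,-Complex.I,-Complex.I], ?_, ?_, ?_⟩
    · rw [SB', Submodule.mem_span_pair]
      exact ⟨1, 1, by funext i; fin_cases i <;> simp⟩
    · rw [LB, Submodule.mem_span_pair]
      exact ⟨1, -Complex.I, by funext i; fin_cases i <;> simp [vB]⟩
    · intro h; have := congrFun h 0; simp at this
  · refine ⟨![1,-Complex.I,-Complex.I,-1], ?_, ?_, ?_⟩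
    · rw [SB', Submodule.mem_span_pair]
      refine ⟨1, -Complex.I, by funext i; fin_cases i <;> simp [Complex.I_mul_I]⟩
    · rw [LB, Submodule.mem_span_pair]
      exact ⟨1, -Complex.I, by funext i; fin_cases i <;> simp [vB]⟩
    · intro h; have := congrFun h 0; simp at this


/-- There are exactly two lines in `ℙ³` meeting all four lines
`L_a, L_b, L_c, L_d` of configuration B, namely the line through the points `(1:0:i:0)`
and `(0:1:0:i)` and the line through `(1:0:-i:0)` and `(0:1:0:-i)`. -/
theorem configB_two_transversals :
    SB ≠ SB' ∧
    ∀ T : Submodule ℂ (Fin 4 → ℂ), Module.finrank ℂ T = 2 →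
      ((∀ x, T ⊓ LB x ≠ ⊥) ↔ T = SB ∨ T = SB') := by
  have hSS : SB ≠ SB' := by
    intro hEq
    have hmem : (![1, 0, Complex.I, 0] : Fin 4 → ℂ) ∈ SB' :=
      hEq ▸ Submodule.subset_span (by simp)
    rw [SB', Submodule.mem_span_pair] at hmem
    obtain ⟨m, n, hmn⟩ := hmem
    have h0 := congrFun hmn 0
    have h2 := congrFun hmn 2
    simp only [Pi.add_apply, Pi.smul_apply, Matrix.cons_val_zero, Matrix.cons_val_one,
      Matrix.head_cons, Matrix.cons_val_two, Matrix.tail_cons, smul_eq_mul,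
      mul_zero, mul_one, add_zero, zero_add, mul_neg] at h0 h2
    rw [h0, one_mul] at h2
    have : Complex.I = 0 := by linear_combination h2 / (-2)
    exact Complex.I_ne_zero this
  refine ⟨hSS, fun T hT => ⟨fun h => ?_, ?_⟩⟩
  · -- forward direction
    obtain ⟨u, hu, hu0⟩ := (Submodule.ne_bot_iff _).1 (h 0)
    obtain ⟨huT, huL⟩ := Submodule.mem_inf.1 hu
    rw [LB, Submodule.mem_span_pair] at huL
    obtain ⟨a, b, hab⟩ := huL
    have hu' : u = ![a,0,b,0] := by
      rw [← hab]; funext i; fin_cases i <;> simp [vB]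
    subst hu'
    obtain ⟨v, hv, hv0⟩ := (Submodule.ne_bot_iff _).1 (h 1)
    obtain ⟨hvT, hvL⟩ := Submodule.mem_inf.1 hv
    rw [LB, Submodule.mem_span_pair] at hvL
    obtain ⟨c, d, hcd⟩ := hvL
    have hv' : v = ![0,c,0,d] := by
      rw [← hcd]; funext i; fin_cases i <;> simp [vB]
    subst hv'
    have hab0 : ¬(a = 0 ∧ b = 0) := by
      rintro ⟨rfl, rfl⟩; exact hu0 (by funext i; fin_cases i <;> simp)
    have hcd0 : ¬(c = 0 ∧ d = 0) := by
      rintro ⟨rfl, rfl⟩; exact hv0 (by funext i; fin_cases i <;> simp)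
    -- linear independence
    have hli : LinearIndependent ℂ ![(![a,0,b,0] : Fin 4 → ℂ), ![0,c,0,d]] := by
      rw [LinearIndependent.pair_iff]
      intro s t hst
      have e0 := congrFun hst 0
      have e1 := congrFun hst 1
      have e2 := congrFun hst 2
      have e3 := congrFun hst 3
      simp only [Pi.add_apply, Pi.smul_apply, Matrix.cons_val_zero, Matrix.cons_val_one,
        Matrix.head_cons, Matrix.cons_val_two, Matrix.tail_cons, Matrix.cons_val_three,
        smul_eq_mul, Pi.zero_apply, mul_zero, add_zero, zero_add, mul_eq_zero] at e0 e1 e2 e3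
      constructor
      · rcases not_and_or.1 hab0 with ha | hb
        · exact e0.resolve_right ha
        · exact e2.resolve_right hb
      · rcases not_and_or.1 hcd0 with hc | hd
        · exact e1.resolve_right hc
        · exact e3.resolve_right hd
    -- T is the span of u and v
    have hle : Submodule.span ℂ {(![a,0,b,0] : Fin 4 → ℂ), ![0,c,0,d]} ≤ T := by
      rw [Submodule.span_le]
      intro z hz
      simp only [Set.mem_insert_iff, Set.mem_singleton_iff] at hz
      rcases hz with rfl | rfl
      · exact huT
      · exact hvT
    have hTspan : T = Submodule.span ℂ {(![a,0,b,0] : Fin 4 → ℂ), ![0,c,0,d]} :=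
      (Submodule.eq_of_le_of_finrank_eq hle (by rw [finrank_span_pair' hli, hT])).symm
    -- equations from L_c
    obtain ⟨w, hw, hw0⟩ := (Submodule.ne_bot_iff _).1 (h 2)
    obtain ⟨hwT, hwL⟩ := Submodule.mem_inf.1 hw
    rw [hTspan, Submodule.mem_span_pair] at hwT
    obtain ⟨α, β, hαβ⟩ := hwT
    rw [LB, Submodule.mem_span_pair] at hwL
    obtain ⟨s, t, hst⟩ := hwL
    have hαβ0 : ¬(α = 0 ∧ β = 0) := by
      rintro ⟨rfl, rfl⟩
      exact hw0 (by rw [← hαβ]; funext i; fin_cases i <;> simp)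
    have hweq := hst.trans hαβ.symm
    have f0 := congrFun hweq 0
    have f1 := congrFun hweq 1
    have f2 := congrFun hweq 2
    have f3 := congrFun hweq 3
    simp only [Pi.add_apply, Pi.smul_apply, Matrix.cons_val_zero, Matrix.cons_val_one,
      Matrix.head_cons, Matrix.cons_val_two, Matrix.tail_cons, Matrix.cons_val_three,
      smul_eq_mul, mul_zero, mul_one, add_zero, zero_add, vB] at f0 f1 f2 f3
    have eq1 : α * a = β * c := by rw [← f0, ← f1]
    have eq2 : α * b = β * d := by rw [← f2, ← f3]
    have had : a * d = b * c := by
      rcases not_and_or.1 hαβ0 with hα | hβ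
      · have hh : α * (a * d) = α * (b * c) := by linear_combination d * eq1 - c * eq2
        exact mul_left_cancel₀ hα hh
      · have hh : β * (a * d) = β * (b * c) := by linear_combination b * eq1 - a * eq2
        exact mul_left_cancel₀ hβ hh
    -- equations from L_d
    obtain ⟨w', hw', hw'0⟩ := (Submodule.ne_bot_iff _).1 (h 3)
    obtain ⟨hw'T, hw'L⟩ := Submodule.mem_inf.1 hw'
    rw [hTspan, Submodule.mem_span_pair] at hw'T
    obtain ⟨γ, δ, hγδ⟩ := hw'T
    rw [LB, Submodule.mem_span_pair] at hw'L
    obtain ⟨s', t', hst'⟩ := hw'L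
    have hγδ0 : ¬(γ = 0 ∧ δ = 0) := by
      rintro ⟨rfl, rfl⟩
      exact hw'0 (by rw [← hγδ]; funext i; fin_cases i <;> simp)
    have hweq' := hst'.trans hγδ.symm
    have g0 := congrFun hweq' 0
    have g1 := congrFun hweq' 1
    have g2 := congrFun hweq' 2
    have g3 := congrFun hweq' 3
    simp only [Pi.add_apply, Pi.smul_apply, Matrix.cons_val_zero, Matrix.cons_val_one,
      Matrix.head_cons, Matrix.cons_val_two, Matrix.tail_cons, Matrix.cons_val_three,
      smul_eq_mul, mul_zero, mul_one, mul_neg_one, add_zero, zero_add, vB] at g0 g1 g2 g3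
    have eq3 : γ * b = δ * c := by rw [← g2, ← g1]
    have eq4 : δ * d = -(γ * a) := by rw [← g3, ← g0]
    have hac : a * c = -(b * d) := by
      rcases not_and_or.1 hγδ0 with hγ | hδ
      · have hh : γ * (a * c) = γ * (-(b * d)) := by linear_combination d * eq3 + c * eq4
        exact mul_left_cancel₀ hγ hh
      · have hh : δ * (a * c) = δ * (-(b * d)) := by linear_combination (-a) * eq3 + b * eq4
        exact mul_left_cancel₀ hδ hh
    -- solve the system
    have ha : a ≠ 0 := by
      rintro rfl
      have hb : b ≠ 0 := fun hb => hab0 ⟨rfl, hb⟩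
      apply hcd0
      constructor
      · have : b * c = 0 := by linear_combination -had
        exact (mul_eq_zero.1 this).resolve_left hb
      · have : b * d = 0 := by linear_combination hac
        exact (mul_eq_zero.1 this).resolve_left hb
    have hd : d ≠ 0 := by
      rintro rfl
      apply hcd0
      have hc : c = 0 := by
        have : a * c = 0 := by linear_combination hac
        exact (mul_eq_zero.1 this).resolve_left ha
      exact ⟨hc, rfl⟩
    have hc : c ≠ 0 := by
      rintro rfl
      have : a * d = 0 := by linear_combination had
      exact hd ((mul_eq_zero.1 this).resolve_left ha)
    have key : (b - Complex.I * a) * (b + Complex.I * a) = 0 := by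
      have h1 : (a * a + b * b) * (c * d) = 0 := by
        linear_combination (a * c) * had + (b * c) * hac
      have h2 : a * a + b * b = 0 :=
        (mul_eq_zero.1 h1).resolve_right (mul_ne_zero hc hd)
      linear_combination h2 - Complex.I_sq * a * a
    rcases mul_eq_zero.1 key with hb | hb
    · -- b = I a : T = SB
      have hbval : b = Complex.I * a := by linear_combination hb
      have hdval : d = Complex.I * c := by
        have hh : a * d = a * (Complex.I * c) := by linear_combination had + c * hbval
        exact mul_left_cancel₀ ha hh
      left
      rw [hTspan, SB]
      have e1 : (![a,0,b,0] : Fin 4 → ℂ) = a • ![1, 0, Complex.I, 0] := by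
        funext i; fin_cases i <;> simp [hbval, mul_comm]
      have e2 : (![0,c,0,d] : Fin 4 → ℂ) = c • ![0, 1, 0, Complex.I] := by
        funext i; fin_cases i <;> simp [hdval, mul_comm]
      rw [e1, e2, span_pair_smul ha hc]
    · -- b = -I a : T = SB'
      have hbval : b = -Complex.I * a := by linear_combination hb
      have hdval : d = -Complex.I * c := by
        have hh : a * d = a * (-Complex.I * c) := by linear_combination had + c * hbval
        exact mul_left_cancel₀ ha hh
      right
      rw [hTspan, SB']
      have e1 : (![a,0,b,0] : Fin 4 → ℂ) = a • ![1, 0, -Complex.I, 0] := by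
        funext i; fin_cases i <;> simp [hbval, mul_comm]
      have e2 : (![0,c,0,d] : Fin 4 → ℂ) = c • ![0, 1, 0, -Complex.I] := by
        funext i; fin_cases i <;> simp [hdval, mul_comm]
      rw [e1, e2, span_pair_smul ha hc]
  · -- reverse direction
    rintro (rfl | rfl) x
    · obtain ⟨w, h1, h2, h3⟩ := SB_meets x
      exact (Submodule.ne_bot_iff _).2 ⟨w, Submodule.mem_inf.2 ⟨h1, h2⟩, h3⟩
    · obtain ⟨w, h1, h2, h3⟩ := SB'_meets x
      exact (Submodule.ne_bot_iff _).2 ⟨w, Submodule.mem_inf.2 ⟨h1, h2⟩, h3⟩
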